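/- arXiv:2002.09433 — 6 statements merged into one kernel-verified Lean document; each statement's English description precedes it below -/
import Mathlib

section
/- Let G = ⟨a_1, a_2, … | r_1, r_2, …⟩ be an arbitrary countable group, i.e. G = F_A/N where F_A is the free group on a countable alphabet A = {a_1, a_2, …} and N is the normal closure in F_A of a set of relators R = {r_1, r_2, …} ⊆ F_A. Let τ : F_A → F₂ be the homomorphism sending each generator a_i to the universal word a_i(x,y). Then the map γ : a_i ↦ a_i(x,y) induces a well-defined injective group homomorphism from G into the 2-generator group T_G = F₂/M, where M is the normal closure in F₂ of the set τ(R) = {r′_s(x,y) = r_s(a_{i_{s,1}}(x,y), …, a_{i_{s,k_s}}(x,y)) : s = 1, 2, …}; that is, the homomorphism G → T_G sending the coset of a_i to the coset of a_i(x,y) is injective. -/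
/-!
Let `F₂` act on `Σ _ : ℤ, Ω` with `x` raising the level and `y` acting on level `n` by a
permutation `F n` of `Ω`. Then `a_i(x,y)` acts on level `n` by the commutator
`⁅(F n ^ i * F (n - 1) ^ i)⁻¹, F (n + 1)⁆`. For `Ω = G^ℤ × G` one can choose `F` supported on the
levels `-2, …, 1` so that this commutator is trivial away from level `0` and is left multiplication
by the `i`-th generator of `G` on the last factor at level `0`. Composing `γ` with this action
therefore gives a faithful action of `G`; as it kills the relators `τ(R)`, the homomorphism
`G → T_G` induced by `γ` is injective.
-/

/-- The free group of rank 2 on the generators `x` (index 0) and `y` (index 1). -/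
abbrev F2 : Type := FreeGroup (Fin 2)

/-- The generator `x` of `F₂`. -/
def xx : F2 := FreeGroup.of 0

/-- The generator `y` of `F₂`. -/
def yy : F2 := FreeGroup.of 1

/-- `c_i = (x y^i)² x⁻¹`. -/
def cc (i : ℕ) : F2 := (xx * yy ^ i) ^ 2 * xx⁻¹

/-- The universal word `a_i(x,y) = y^{c_i} · y^{-x} = c_i⁻¹ y c_i · x⁻¹ y⁻¹ x`. -/
def aa (i : ℕ) : F2 := (cc i)⁻¹ * yy * cc i * (xx⁻¹ * yy⁻¹ * xx)

open Equiv Function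
open scoped commutatorElement

theorem QuotientGroup.map_normalClosure_injective {F F' H : Type*} [Group F] [Group F'] [Group H]
    {R : Set F} (τ : F →* F') {Θ : F' →* H} {ι : F ⧸ Subgroup.normalClosure R →* H}
    (hι : Injective ι) (hΘ : Θ.comp τ = ι.comp (QuotientGroup.mk' _)) :
    Injective (QuotientGroup.map _ _ τ (Subgroup.comap_normalClosure_image_ge R τ)) := by
  have hR : Subgroup.normalClosure (τ '' R) ≤ Θ.ker := by
    refine Subgroup.normalClosure_le_normal ?_
    rintro _ ⟨r, hr, rfl⟩
    rw [SetLike.mem_coe, MonoidHom.mem_ker, ← MonoidHom.comp_apply, hΘ, MonoidHom.comp_apply,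
      QuotientGroup.mk'_apply, (QuotientGroup.eq_one_iff r).mpr (Subgroup.subset_normalClosure hr),
      map_one]
  have hcomp : (QuotientGroup.lift _ Θ hR).comp
      (QuotientGroup.map _ _ τ (Subgroup.comap_normalClosure_image_ge R τ)) = ι :=
    QuotientGroup.monoidHom_ext _ hΘ
  refine Injective.of_comp (f := QuotientGroup.lift _ Θ hR) ?_
  rwa [← MonoidHom.coe_comp, hcomp]

namespace Equiv.Perm

variable {α β : Type*}

def prodCongrHom : Perm α × Perm β →* Perm (α × β) where
  toFun e := e.1.prodCongr e.2
  map_one' := rfl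
  map_mul' _ _ := rfl

@[simp]
theorem prodCongrHom_apply (e : Perm α × Perm β) (p : α × β) :
    prodCongrHom e p = (e.1 p.1, e.2 p.2) := rfl

end Equiv.Perm

section Twist

variable {K G : Type*} [Group K] [Group G]

def twistPerm (h : K →* G) : Perm (K × G) :=
  prodShear (Equiv.refl K) fun k => Equiv.mulLeft (h k)

theorem commutatorElement_inv_twistPerm (h : K →* G) (k : K) :
    ⁅(Perm.prodCongrHom (Equiv.mulLeft k, (1 : Perm G)))⁻¹, twistPerm h⁆ =
      Perm.prodCongrHom (1, Equiv.mulLeft (h k)) := by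
  rw [commutatorElement_def, inv_inv, ← map_inv]
  ext ⟨k', x⟩ <;> simp [twistPerm, Perm.mul_apply, Perm.inv_def]

end Twist

section Shift

variable {α : Type*}

def shiftPerm : Perm (ℤ → α) where
  toFun f n := f (n + 1)
  invFun f n := f (n - 1)
  left_inv f := by simp
  right_inv f := by simp

theorem shiftPerm_pow_apply (i : ℕ) (f : ℤ → α) (n : ℤ) :
    (shiftPerm ^ i) f n = f (n + i) := by
  induction i generalizing f with
  | zero => simp
  | succ i ih => rw [pow_succ, Perm.mul_apply, ih]; simp [shiftPerm, add_assoc]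

theorem conj_shiftPerm_pow_mul_inv_pow {G : Type*} [Group G] (g : ℤ → G) (i : ℕ) :
    ((Equiv.mulLeft g)⁻¹ * shiftPerm * Equiv.mulLeft g) ^ i * shiftPerm⁻¹ ^ i =
      Equiv.mulLeft (g⁻¹ * fun n => g (n + i)) := by
  have hconj := conj_pow (a := (Equiv.mulLeft g)⁻¹) (b := shiftPerm) (i := i)
  have hcomm :
      shiftPerm ^ i * Equiv.mulLeft g = Equiv.mulLeft (fun n => g (n + i)) * shiftPerm ^ i := by
    ext f n; simp [Perm.mul_apply, shiftPerm_pow_apply]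
  rw [inv_inv] at hconj
  rw [hconj, inv_pow, mul_assoc, mul_assoc, ← mul_assoc _ (Equiv.mulLeft g), hcomm,
    mul_inv_cancel_right]
  ext f n
  simp [Perm.inv_def]

end Shift

section Levels

variable {Ω : Type*}

def levelShift : Perm (Σ _ : ℤ, Ω) where
  toFun p := ⟨p.1 + 1, p.2⟩
  invFun p := ⟨p.1 - 1, p.2⟩
  left_inv p := by simp
  right_inv p := by simp

theorem lift_levelShift_aa (F : ℤ → Perm Ω) (i : ℕ) :
    FreeGroup.lift ![levelShift, Perm.sigmaCongrRight F] (aa i) =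
      Perm.sigmaCongrRight fun n => ⁅(F n ^ i * F (n - 1) ^ i)⁻¹, F (n + 1)⁆ := by
  have hy : Perm.sigmaCongrRight F ^ i = Perm.sigmaCongrRight (F ^ i) :=
    (map_pow (Perm.sigmaCongrRightHom _) F i).symm
  ext ⟨n, ω⟩ <;>
    simp [aa, cc, xx, yy, hy, sq, levelShift, Perm.mul_apply, Perm.inv_def, commutatorElement_def]

end Levels

section Construction

variable {G : Type*} [Group G]

/-- On level `0` the `i`-th powers of the conjugated shift and of the inverse shift on level `-1`
combine to left multiplication by `g⁻¹ * g (· + i)`, whose value at `0` the twist on level `1`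
reads off; the shift on level `-2` makes the commutators on levels `-1` and `-2` trivial. -/
def levelPerm (g : ℤ → G) (n : ℤ) : Perm ((ℤ → G) × G) :=
  if n = 1 then twistPerm (Pi.evalMonoidHom (fun _ => G) 0)
  else if n = 0 then Perm.prodCongrHom ((Equiv.mulLeft g)⁻¹ * shiftPerm * Equiv.mulLeft g, 1)
  else if n = -1 then (Perm.prodCongrHom (shiftPerm, 1))⁻¹
  else if n = -2 then Perm.prodCongrHom (shiftPerm, 1)
  else 1

theorem commutatorElement_levelPerm (g : ℤ → G) (i : ℕ) (n : ℤ) :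
    ⁅(levelPerm g n ^ i * levelPerm g (n - 1) ^ i)⁻¹, levelPerm g (n + 1)⁆ =
      (Pi.mulSingle 0 (Perm.prodCongrHom (1, Equiv.mulLeft ((g 0)⁻¹ * g i))) : ℤ → Perm _) n := by
  obtain rfl | rfl | rfl | rfl | hn : n = 0 ∨ n = -1 ∨ n = -2 ∨ n = -3 ∨ n < -3 ∨ 0 < n := by
    omega
  · have hP : levelPerm g 0 ^ i * levelPerm g (0 - 1) ^ i =
        Perm.prodCongrHom (Equiv.mulLeft (g⁻¹ * fun n => g (n + i)), 1) := by
      norm_num only [levelPerm, if_true, if_false, one_pow, mul_one]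
      rw [← map_inv, ← map_pow, ← map_pow, ← map_mul, Prod.inv_mk, Prod.pow_mk, Prod.pow_mk,
        Prod.mk_mul_mk, inv_one, one_pow, mul_one, conj_shiftPerm_pow_mul_inv_pow]
    have hU : levelPerm g (0 + 1) = twistPerm (Pi.evalMonoidHom (fun _ => G) 0) := by
      norm_num only [levelPerm, if_true, if_false, one_pow, mul_one]
    rw [hP, hU, commutatorElement_inv_twistPerm]
    simp
  · have hP : levelPerm g (-1) ^ i * levelPerm g (-1 - 1) ^ i = 1 := by
      norm_num only [levelPerm, if_true, if_false, one_pow, mul_one]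
      rw [inv_pow, inv_mul_cancel]
    rw [hP, inv_one, commutatorElement_one_left, Pi.mulSingle_eq_of_ne (by omega)]
  · have hP : levelPerm g (-2) ^ i * levelPerm g (-2 - 1) ^ i =
        Perm.prodCongrHom (shiftPerm, 1) ^ i := by
      norm_num only [levelPerm, if_true, if_false, one_pow, mul_one]
    have hQ : levelPerm g (-2 + 1) = (Perm.prodCongrHom (shiftPerm, 1))⁻¹ := by
      norm_num only [levelPerm, if_true, if_false, one_pow, mul_one]
    rw [hP, hQ, Pi.mulSingle_eq_of_ne (by omega), commutatorElement_eq_one_iff_commute]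
    exact ((Commute.refl _).pow_left i).inv_inv
  · have hP : levelPerm g (-3) ^ i * levelPerm g (-3 - 1) ^ i = 1 := by
      norm_num only [levelPerm, if_true, if_false, one_pow, mul_one]
    rw [hP, inv_one, commutatorElement_one_left, Pi.mulSingle_eq_of_ne (by omega)]
  · have h1 : levelPerm g (n + 1) = 1 := by
      simp only [levelPerm]
      split_ifs <;> first | rfl | omega
    rw [h1, commutatorElement_one_right, Pi.mulSingle_eq_of_ne (by omega)]

theorem exists_aa_succ_eq_injective_perm (g : ℕ → G) :
    ∃ (Θ : F2 →* Perm (Σ _ : ℤ, (ℤ → G) × G)) (ι : G →* Perm (Σ _ : ℤ, (ℤ → G) × G)),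
      Injective ι ∧ ∀ i : ℕ, Θ (aa (i + 1)) = ι (g i) := by
  let g' : ℤ → G
    | .ofNat (k + 1) => g k
    | _ => 1
  refine ⟨FreeGroup.lift ![levelShift, Perm.sigmaCongrRight (levelPerm g')],
    (Perm.sigmaCongrRightHom _).comp <| (MonoidHom.mulSingle _ 0).comp <|
      Perm.prodCongrHom.comp <| (MonoidHom.inr _ _).comp (MulAction.toPermHom G G), ?_, fun i => ?_⟩
  · intro a b hab
    simpa using congr_arg (fun p => p.2.2) (Equiv.congr_fun hab ⟨0, (1, 1)⟩)
  · rw [lift_levelShift_aa]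
    congr 1
    funext n
    rw [commutatorElement_levelPerm]
    have h0 : g' 0 = 1 := rfl
    have hs : g' ↑(i + 1) = g i := rfl
    rw [h0, hs, inv_one, one_mul]
    rfl

end Construction

/-- **Theorem 1.** For any countable group `G = ⟨a_1, a_2, … | r_1, r_2, …⟩`, presented as a
quotient of the free group on the countable alphabet `{a_1, a_2, …}` (indexed by `ℕ`, index `i`
corresponding to `a_{i+1}`) by the normal closure of a relator set `R`, the map
`γ : a_i ↦ a_i(x,y)` induces a well-defined injective homomorphism of `G` into the 2-generator
group `T_G = ⟨x, y | r′_1(x,y), r′_2(x,y), …⟩`, the quotient of `F₂` by the normal closure of the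
image of `R` under the substitution homomorphism `τ : a_i ↦ a_i(x,y)`. -/
theorem universal_embedding (R : Set (FreeGroup ℕ)) :
    ∃ φ : (FreeGroup ℕ ⧸ Subgroup.normalClosure R) →*
        (F2 ⧸ Subgroup.normalClosure
          (⇑(FreeGroup.lift fun i : ℕ => aa (i + 1)) '' R)),
      Function.Injective φ ∧
      ∀ w : FreeGroup ℕ,
        φ (QuotientGroup.mk w)
          = QuotientGroup.mk ((FreeGroup.lift fun i : ℕ => aa (i + 1)) w) := by
  obtain ⟨Θ, ι, hι, hΘ⟩ := exists_aa_succ_eq_injective_perm fun k =>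
    (QuotientGroup.mk (FreeGroup.of k) : FreeGroup ℕ ⧸ Subgroup.normalClosure R)
  refine ⟨_, QuotientGroup.map_normalClosure_injective (Θ := Θ) _ hι ?_, fun w => rfl⟩
  exact FreeGroup.ext_hom _ _ fun k => by simpa using hΘ k
end

section
/- Let F₂ be the free group on x and y, and let F̄ = ⟨a_i(x,y) : i = 1, 2, …⟩ be the subgroup of F₂ generated by the universal words a_i(x,y). For any subgroup N of F̄, let N̄ denote the normal closure of N in the group F̄, and let Ñ denote the normal closure of N in the whole group F₂. Then F̄ ∩ Ñ = N̄. -/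
/-- `F̄ = ⟨a_i(x,y) : i = 1, 2, …⟩ ≤ F₂`. -/
def Fbar : Subgroup F2 := Subgroup.closure (Set.range fun i : ℕ => aa (i + 1))

namespace UnivWords

open Multiplicative SemidirectProduct

variable (Q : Type) [Group Q]

/-! ### A `Q`-valued cocycle on `F₂` realizing an arbitrary sequence on the words `x^i y^i` -/

/-- Shift automorphism of `ℤ → Q`. -/
def shiftE (g : ℤ) : (ℤ → Q) ≃* (ℤ → Q) where
  toFun h n := h (n - g)
  invFun h n := h (n + g)
  left_inv h := by funext n; simp
  right_inv h := by funext n; simp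
  map_mul' h h' := rfl

def shiftQ : Multiplicative ℤ →* MulAut (ℤ → Q) :=
  MonoidHom.mk' (fun g => shiftE Q g.toAdd) (by
    intro g g'
    ext h n
    show h (n - (g.toAdd + g'.toAdd)) = _
    show _ = h (n - g.toAdd - g'.toAdd)
    ring_nf)

lemma shiftQ_apply (g : ℤ) (h : ℤ → Q) (n : ℤ) :
    (shiftQ Q (ofAdd g) h) n = h (n - g) := rfl

abbrev WQ := (ℤ → Q) ⋊[shiftQ Q] Multiplicative ℤ

variable (q : ℕ → Q)

def dl : ℤ → Q := fun n => if n < 0 then q n.natAbs * (q (n.natAbs - 1))⁻¹ else 1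

def HH : F2 →* WQ Q :=
  FreeGroup.lift ![inr (ofAdd 1), ⟨dl Q q, ofAdd (-1)⟩]

/-- The cocycle. -/
def ff : F2 → Q := fun s => (HH Q q s).left 0

lemma HH_xx : HH Q q xx = inr (ofAdd 1) := by
  simp [HH, xx, FreeGroup.lift_apply_of]

lemma HH_yy : HH Q q yy = ⟨dl Q q, ofAdd (-1)⟩ := by
  simp [HH, yy, FreeGroup.lift_apply_of]

lemma HH_xx_pow (i : ℕ) : HH Q q (xx ^ i) = inr (ofAdd (i : ℤ)) := by
  rw [map_pow, HH_xx, ← map_pow]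
  congr 1
  rw [← ofAdd_nsmul]; norm_num

lemma HH_yy_pow_right (i : ℕ) :
    (HH Q q (yy ^ i)).right = ofAdd (-(i : ℤ)) := by
  have : (HH Q q (yy ^ i)).right = rightHom (HH Q q (yy ^ i)) := rfl
  rw [this, map_pow, map_pow, HH_yy]
  have : rightHom (⟨dl Q q, ofAdd (-1)⟩ : WQ Q) = ofAdd (-1 : ℤ) := rfl
  rw [this, ← ofAdd_nsmul]; simp

variable (hq0 : q 0 = 1)

include hq0 in
lemma HH_yy_pow_left (i : ℕ) : (HH Q q (yy ^ i)).left (-(i : ℤ)) = q i := by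
  induction i with
  | zero => simpa using hq0.symm
  | succ i ih =>
    rw [pow_succ', map_mul, HH_yy, mul_left]
    show dl Q q (-(↑(i+1):ℤ)) * (shiftQ Q (ofAdd (-1)) ((HH Q q (yy ^ i)).left)) (-(↑(i+1):ℤ)) = _
    rw [shiftQ_apply]
    have h1 : (-(↑(i+1):ℤ)) - (-1) = -(i:ℤ) := by push_cast; ring
    rw [h1, ih]
    have h2 : dl Q q (-(↑(i+1):ℤ)) = q (i+1) * (q i)⁻¹ := by
      unfold dl
      have hlt : (-(↑(i+1):ℤ)) < 0 := by push_cast; omega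
      have hna : ((-(↑(i+1):ℤ))).natAbs = i + 1 := by omega
      rw [if_pos hlt, hna]
      simp
    rw [h2, inv_mul_cancel_right]

include hq0 in
lemma key (i : ℕ) (s : F2) : ff Q q (xx ^ i * yy ^ i * s) = q i * ff Q q s := by
  unfold ff
  rw [mul_assoc, map_mul, map_mul, HH_xx_pow, mul_left, left_inr, right_inr, one_mul]
  rw [shiftQ_apply, mul_left, Pi.mul_apply, HH_yy_pow_right, shiftQ_apply]
  have h1 : (0 : ℤ) - (i:ℤ) = -(i:ℤ) := by ring
  rw [h1]
  have h2 : -(i:ℤ) - -(i:ℤ) = 0 := by ring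
  rw [h2, HH_yy_pow_left Q q hq0]

/-! ### The base group of the HNN extension -/

/-- Translation action of `F2` on `F2 → Q`. -/
def phiW : F2 →* MulAut (F2 → Q) :=
  MonoidHom.mk' (fun v =>
    { toFun := fun h s => h (v⁻¹ * s)
      invFun := fun h s => h (v * s)
      left_inv := fun h => by funext s; simp
      right_inv := fun h => by funext s; simp
      map_mul' := fun h h' => rfl }) (by
    intro v w
    ext h s
    show h ((v * w)⁻¹ * s) = h (w⁻¹ * (v⁻¹ * s))
    rw [mul_inv_rev, mul_assoc])

abbrev W := (F2 → Q) ⋊[phiW Q] F2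

abbrev DZ : Type := FreeGroup ℤ

def chi : Multiplicative ℤ →* MulAut DZ :=
  MonoidHom.mk' (fun g => (FreeGroup.freeGroupCongr (Equiv.addRight g.toAdd))) (by
    intro g g'
    apply MulEquiv.toMonoidHom_injective
    apply FreeGroup.ext_hom
    intro a
    show FreeGroup.of (a + (g.toAdd + g'.toAdd)) =
      FreeGroup.of (a + g'.toAdd + g.toAdd)
    congr 1
    ring)

abbrev P' := DZ ⋊[chi] Multiplicative ℤ

def tau : F2 →* Multiplicative ℤ := FreeGroup.lift ![ofAdd 1, ofAdd (-1)]

def psi : F2 →* P' := FreeGroup.lift ![inl (FreeGroup.of (0:ℤ)), inr (ofAdd 1)]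

def theta : P' →* F2 :=
  SemidirectProduct.lift (FreeGroup.lift fun n : ℤ => yy ^ n * xx * yy ^ (-n))
    (zpowersHom F2 yy) (by
      intro g
      apply FreeGroup.ext_hom
      intro n
      simp only [MonoidHom.comp_apply, MulEquiv.coe_toMonoidHom, MulAut.conj_apply,
        zpowersHom_apply]
      have hchi : (chi g) (FreeGroup.of n) = FreeGroup.of (n + g.toAdd) := by
        show (FreeGroup.freeGroupCongr (Equiv.addRight g.toAdd)) (FreeGroup.of n) = _
        rw [FreeGroup.freeGroupCongr_apply, FreeGroup.map.of]
        rfl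
      rw [hchi, FreeGroup.lift_apply_of, FreeGroup.lift_apply_of, zpow_add, neg_add, zpow_add]
      group)

lemma theta_psi : theta.comp (psi) = MonoidHom.id F2 := by
  apply FreeGroup.ext_hom
  intro a
  fin_cases a
  · show theta (psi xx) = xx
    rw [psi, xx, FreeGroup.lift_apply_of]
    show theta (inl (FreeGroup.of (0:ℤ))) = xx
    rw [theta, SemidirectProduct.lift_inl, FreeGroup.lift_apply_of]
    simp
  · show theta (psi yy) = yy
    rw [psi, yy, FreeGroup.lift_apply_of]
    show theta (inr (ofAdd 1)) = yy
    rw [theta, SemidirectProduct.lift_inr, zpowersHom_apply]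
    simp

lemma psi_inj : Function.Injective (psi) := by
  intro v w h
  have := congrArg theta h
  simpa [← MonoidHom.comp_apply, theta_psi] using this

/-- The base group. -/
abbrev BB := W Q × P'

def jone : F2 →* BB Q :=
  (inr : F2 →* W Q).prod ((inr : Multiplicative ℤ →* P').comp tau)

def jtwo : F2 →* BB Q :=
  (FreeGroup.lift ![inl (ff Q q), inr xx] : F2 →* W Q).prod psi

def rho : Q →* BB Q :=
  ((inl : (F2 → Q) →* W Q).comp (Pi.constMonoidHom F2 Q)).prod 1

lemma jone_apply (w : F2) : jone Q w = (inr w, inr (tau w)) := rfl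

lemma tau_xx : tau xx = ofAdd 1 := by simp [tau, xx, FreeGroup.lift_apply_of]

lemma tau_yy : tau yy = ofAdd (-1) := by simp [tau, yy, FreeGroup.lift_apply_of]

lemma jtwo_xx : jtwo Q q xx = (inl (ff Q q), inl (FreeGroup.of (0:ℤ))) := by
  simp [jtwo, psi, xx, FreeGroup.lift_apply_of, MonoidHom.prod_apply]

lemma jtwo_yy : jtwo Q q yy = jone Q xx := by
  rw [jone_apply, tau_xx]
  simp [jtwo, psi, yy, FreeGroup.lift_apply_of, MonoidHom.prod_apply]

lemma jone_inj : Function.Injective (jone Q) := by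
  intro v w h
  have : (inr v : W Q) = inr w := congrArg Prod.fst h
  exact inr_injective this

lemma jtwo_inj : Function.Injective (jtwo Q q) := by
  intro v w h
  have : psi v = psi w := congrArg Prod.snd h
  exact psi_inj this

lemma rho_inj : Function.Injective (rho Q) := by
  intro v w h
  have h1 : (inl (Pi.constMonoidHom F2 Q v) : W Q) = inl (Pi.constMonoidHom F2 Q w) :=
    congrArg Prod.fst h
  have h2 := inl_injective h1
  exact congrFun h2 1

lemma tau_xxyy (i : ℕ) : tau (xx ^ i * yy ^ i) = 1 := by
  rw [map_mul, map_pow, map_pow, tau_xx, tau_yy, ← ofAdd_nsmul, ← ofAdd_nsmul, ← ofAdd_add]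
  simp

include hq0 in
lemma Rel (i : ℕ) :
    (jone Q (xx ^ i * yy ^ i))⁻¹ * jtwo Q q xx * jone Q (xx ^ i * yy ^ i) * (jtwo Q q xx)⁻¹
      = rho Q (q i) := by
  have hstep : ∀ (u : F2) (h : F2 → Q),
      (inr u : W Q)⁻¹ * inl h * inr u * (inl h)⁻¹
        = inl ((((phiW Q) u)⁻¹ h) * h⁻¹) := by
    intro u h
    rw [map_mul (inl : (F2 → Q) →* W Q), inl_aut_inv u h, ← map_inv (inr : F2 →* W Q),
      ← map_inv (inl : (F2 → Q) →* W Q)]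
  rw [jone_apply, jtwo_xx]
  apply Prod.ext
  · show (inr (xx ^ i * yy ^ i) : W Q)⁻¹ * inl (ff Q q) * inr (xx ^ i * yy ^ i)
        * (inl (ff Q q))⁻¹ = inl (Pi.constMonoidHom F2 Q (q i))
    rw [hstep]
    congr 1
    funext s
    show (((phiW Q) (xx ^ i * yy ^ i))⁻¹ (ff Q q)) s * ((ff Q q)⁻¹) s = q i
    have hinv : (((phiW Q) (xx ^ i * yy ^ i))⁻¹ (ff Q q)) s = ff Q q (xx ^ i * yy ^ i * s) := rfl
    rw [hinv, Pi.inv_apply, key Q q hq0 i s]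
    group
  · show (inr (tau (xx ^ i * yy ^ i)) : P')⁻¹ * inl (FreeGroup.of (0:ℤ))
        * inr (tau (xx ^ i * yy ^ i)) * (inl (FreeGroup.of (0:ℤ)))⁻¹ = 1
    rw [tau_xxyy]
    simp

/-! ### The HNN extension -/

def Aone : Subgroup (BB Q) := (jone Q).range

def Atwo : Subgroup (BB Q) := (jtwo Q q).range

noncomputable def phiE : Aone Q ≃* Atwo Q q :=
  (MonoidHom.ofInjective (jone_inj Q)).symm.trans (MonoidHom.ofInjective (jtwo_inj Q q))

lemma trans_ofInjective_apply {B C : Type*} [Group B] [Group C] (f g : B →* C)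
    (hf : Function.Injective f) (hg : Function.Injective g) (w : B) (hmem : f w ∈ f.range) :
    ((((MonoidHom.ofInjective hf).symm.trans (MonoidHom.ofInjective hg)) ⟨f w, hmem⟩
      : g.range) : C) = g w := by
  have e1 : (MonoidHom.ofInjective hf) w = ⟨f w, hmem⟩ :=
    Subtype.ext (MonoidHom.ofInjective_apply _)
  rw [MulEquiv.trans_apply, ← e1]
  simp only [MulEquiv.symm_apply_apply, MonoidHom.ofInjective_apply]

/-- The (2-generated extension) group in which `Q` embeds with `a_i ↦ q_i`. -/
abbrev GG := HNNExtension (BB Q) (Aone Q) (Atwo Q q) (phiE Q q)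

lemma conj_of (w : F2) :
    HNNExtension.t * HNNExtension.of (jone Q w) * HNNExtension.t⁻¹
      = (HNNExtension.of (jtwo Q q w) : GG Q q) := by
  have hmem : jone Q w ∈ Aone Q := ⟨w, rfl⟩
  have h0 : ((phiE Q q ⟨jone Q w, hmem⟩ : Atwo Q q) : BB Q) = jtwo Q q w :=
    trans_ofInjective_apply (jone Q) (jtwo Q q) (jone_inj Q) (jtwo_inj Q q) w hmem
  rw [← h0]
  exact (HNNExtension.equiv_eq_conj (φ := phiE Q q) ⟨jone Q w, hmem⟩).symm

noncomputable def PsiH : F2 →* GG Q q :=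
  FreeGroup.lift ![HNNExtension.t⁻¹, HNNExtension.of (jone Q xx)]

lemma PsiH_xx : PsiH Q q xx = HNNExtension.t⁻¹ := by
  simp [PsiH, xx, FreeGroup.lift_apply_of]

lemma PsiH_yy : PsiH Q q yy = HNNExtension.of (jone Q xx) := by
  simp [PsiH, yy, FreeGroup.lift_apply_of]

include hq0 in
lemma PsiH_aa (i : ℕ) : PsiH Q q (aa i) = HNNExtension.of (rho Q (q i)) := by
  have hYU : HNNExtension.t⁻¹ * HNNExtension.of (jone Q (xx ^ i)) * HNNExtension.t
      = (HNNExtension.of (jone Q (yy ^ i)) : GG Q q) := by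
    have h := conj_of Q q (yy ^ i)
    rw [map_pow (jtwo Q q) yy i, jtwo_yy, ← map_pow (jone Q) xx i] at h
    rw [← h]
    group
  have hZ := conj_of Q q xx
  have hZ' : HNNExtension.t * (HNNExtension.of (jone Q xx))⁻¹ * HNNExtension.t⁻¹
      = (HNNExtension.of (jtwo Q q xx) : GG Q q)⁻¹ := by
    rw [← hZ]; group
  have hcc : PsiH Q q (cc i) = HNNExtension.t⁻¹ * HNNExtension.of (jone Q (xx ^ i * yy ^ i)) := by
    rw [cc, map_mul, map_pow, map_inv, map_mul, map_pow, PsiH_xx, PsiH_yy, inv_inv]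
    rw [← map_pow (HNNExtension.of) (jone Q xx), ← map_pow (jone Q)]
    rw [map_mul (jone Q), map_mul (HNNExtension.of), ← hYU]
    simp [sq, mul_assoc]
  simp only [aa, map_mul, map_inv]
  rw [hcc, PsiH_xx, PsiH_yy, inv_inv]
  have e2 : (HNNExtension.t⁻¹ * HNNExtension.of (jone Q (xx ^ i * yy ^ i)) : GG Q q)⁻¹
        * HNNExtension.of (jone Q xx)
        * (HNNExtension.t⁻¹ * HNNExtension.of (jone Q (xx ^ i * yy ^ i)))
        * (HNNExtension.t * (HNNExtension.of (jone Q xx))⁻¹ * HNNExtension.t⁻¹)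
      = (HNNExtension.of (jone Q (xx ^ i * yy ^ i)))⁻¹
        * (HNNExtension.t * HNNExtension.of (jone Q xx) * HNNExtension.t⁻¹)
        * HNNExtension.of (jone Q (xx ^ i * yy ^ i))
        * (HNNExtension.t * (HNNExtension.of (jone Q xx))⁻¹ * HNNExtension.t⁻¹) := by
    group
  have hfin := congrArg (HNNExtension.of (G := BB Q) (A := Aone Q) (B := Atwo Q q)
    (φ := phiE Q q)) (Rel Q q hq0 i)
  rw [map_mul, map_mul, map_mul, map_inv, map_inv] at hfin
  rw [e2, hZ, hZ']
  exact hfin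

include hq0 in
theorem embedding_exists :
    ∃ (G' : Type) (_ : Group G') (Φ : F2 →* G') (ρ' : Q →* G'),
      Function.Injective ρ' ∧ ∀ i, Φ (aa i) = ρ' (q i) := by
  refine ⟨GG Q q, inferInstance, PsiH Q q, (HNNExtension.of).comp (rho Q),
    fun a b h => rho_inj Q (HNNExtension.of_injective (φ := phiE Q q) h), fun i => ?_⟩
  rw [PsiH_aa Q q hq0 i]
  rfl

end UnivWords

lemma aa_mem_Fbar (k : ℕ) : aa (k + 1) ∈ Fbar := Subgroup.subset_closure ⟨k, rfl⟩

/-- The sequence of images of the generators `a_{i}`, `i ≥ 1`, in `F̄/N̄`. -/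
def qSeq (N : Subgroup Fbar) : ℕ → Fbar ⧸ Subgroup.normalClosure (N : Set Fbar)
  | 0 => 1
  | (k+1) => QuotientGroup.mk' (Subgroup.normalClosure (N : Set Fbar)) ⟨aa (k+1), aa_mem_Fbar k⟩

/-- **Lemma (universal elements in F₂).** Let `F̄ = ⟨a_1(x,y), a_2(x,y), …⟩ ≤ F₂`.  For any
subgroup `N` of `F̄`, if `N̄` denotes the normal closure of `N` in the group `F̄` and `Ñ` the
normal closure of `N` in the whole group `F₂`, then `F̄ ∩ Ñ = N̄` (both sides regarded as
subgroups of `F₂`, `N̄` via the inclusion `F̄ ≤ F₂`). -/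
theorem inf_normalClosure_eq (N : Subgroup Fbar) :
    Fbar ⊓ Subgroup.normalClosure ((Subgroup.map Fbar.subtype N : Subgroup F2) : Set F2)
      = Subgroup.map Fbar.subtype (Subgroup.normalClosure (N : Set Fbar)) := by
  set M := Subgroup.normalClosure (N : Set Fbar) with hM
  set π : Fbar →* Fbar ⧸ M := QuotientGroup.mk' M with hπ
  obtain ⟨G', _, Φ, ρ', hρ, hΦ⟩ :=
    UnivWords.embedding_exists (Fbar ⧸ M) (qSeq N) rfl
  -- the two homomorphisms `Φ ∘ incl` and `ρ' ∘ π` agree on `F̄`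
  have hgen : Set.EqOn (Φ.comp Fbar.subtype) (ρ'.comp π)
      ((Fbar.subtype) ⁻¹' (Set.range fun i : ℕ => aa (i + 1))) := by
    rintro ⟨gv, hgv⟩ hpre
    obtain ⟨i, hi⟩ := hpre
    simp only [MonoidHom.comp_apply]
    have h1 : Fbar.subtype ⟨gv, hgv⟩ = aa (i + 1) := hi.symm
    rw [h1, hΦ (i+1)]
    congr 1
    have : (⟨gv, hgv⟩ : Fbar) = ⟨aa (i+1), aa_mem_Fbar i⟩ := Subtype.ext hi.symm
    rw [this]
    rfl
  have htop : (Subgroup.closure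
      ((Fbar.subtype) ⁻¹' (Set.range fun i : ℕ => aa (i + 1))) : Subgroup Fbar) = ⊤ :=
    Subgroup.closure_closure_coe_preimage
  have hagree : ∀ g : Fbar, Φ (g : F2) = ρ' (π g) := by
    intro g
    have hcl := MonoidHom.eqOn_closure hgen
    have hgtop : g ∈ Subgroup.closure
        ((Fbar.subtype) ⁻¹' (Set.range fun i : ℕ => aa (i + 1))) := by
      rw [htop]; trivial
    exact hcl hgtop
  apply le_antisymm
  · rintro g hg
    rw [Subgroup.mem_inf] at hg
    obtain ⟨hgF, hgN⟩ := hg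
    have hkerN : Subgroup.normalClosure
        ((Subgroup.map Fbar.subtype N : Subgroup F2) : Set F2) ≤ Φ.ker := by
      apply Subgroup.normalClosure_le_normal
      rintro x ⟨n, hn, rfl⟩
      have h1 : π n = 1 := (QuotientGroup.eq_one_iff _).2 (Subgroup.subset_normalClosure hn)
      have h2 : Φ (n : F2) = 1 := by rw [hagree n, h1, map_one]
      exact h2
    have h1 : Φ g = 1 := hkerN hgN
    have h2 : ρ' (π ⟨g, hgF⟩) = 1 := by rw [← hagree ⟨g, hgF⟩]; exact h1
    have h3 : π ⟨g, hgF⟩ = 1 := hρ (by rw [h2, map_one])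
    have h4 : (⟨g, hgF⟩ : Fbar) ∈ M := (QuotientGroup.eq_one_iff _).1 h3
    exact ⟨⟨g, hgF⟩, h4, rfl⟩
  · apply le_inf
    · exact Subgroup.map_subtype_le _
    · rw [Subgroup.map_le_iff_le_comap]
      haveI : ((Subgroup.normalClosure
          ((Subgroup.map Fbar.subtype N : Subgroup F2) : Set F2)).comap Fbar.subtype).Normal :=
        Subgroup.Normal.comap inferInstance _
      apply Subgroup.normalClosure_le_normal
      intro n hn
      exact Subgroup.subset_normalClosure ⟨n, hn, rfl⟩
end

section
/- In the free group F₂ on x and y, the universal words a_1(x,y), a_2(x,y), … freely generate a free subgroup of countably infinite rank; equivalently, the group homomorphism from the free group on a countably infinite alphabet {b_1, b_2, …} to F₂ sending b_i ↦ a_i(x,y) for every i ≥ 1 is injective. -/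
/-!
Map `F₂` into the wreath product `(ℤ² → F(ℕ)) ⋊ ℤ²` by `x ↦ (1, (1, 0))` and
`y ↦ (label, (0, 1))`. Reading a word, a letter `y^{±1}` that crosses the lattice edge from `p`
to `p + (0, 1)` contributes `label (-p)^{±1}` to the value of the base component at the origin.
Every `a_i` has exponent sum zero in `x` and in `y`, so its image lies in the base group
`ℤ² → F(ℕ)`, on which evaluation at the origin is a homomorphism. The support of `label` lies in
the column `{1} × ℤ`, and the only letters of `a_{n+1}` crossing edges in the column `{-1} × ℤ`
are the middle `y`, at `(-1, -2n-2)`, and the final `y⁻¹`, at `(-1, 0)`. So `a_{n+1}` is sent to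
`label (1, 2n+2) * label (1, 0)⁻¹ = b_n`: after evaluation at the origin, `b_n ↦ a_{n+1}` becomes
the identity of `F(ℕ)`.
-/

theorem FreeGroup.injective_lift_of_retraction {ι G K N : Type*} [Group G] [Group K] [Group N]
    {a : ι → G} (Ψ : G →* K) {j : N →* K} (hj : Function.Injective j) (r : N →* FreeGroup ι)
    (n : ι → N) (ha : ∀ i, Ψ (a i) = j (n i)) (hn : ∀ i, r (n i) = of i) :
    Function.Injective (lift a) := by
  have hr : r.comp (lift n) = MonoidHom.id _ := ext_hom _ _ fun i => by simp [hn]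
  have hn_inj : Function.Injective (lift n) :=
    Function.LeftInverse.injective (g := r) fun w => DFunLike.congr_fun hr w
  have hΨ : Ψ.comp (lift a) = j.comp (lift n) := ext_hom _ _ fun i => by simp [ha]
  refine Function.Injective.of_comp (f := Ψ) ?_
  rw [← MonoidHom.coe_comp, hΨ, MonoidHom.coe_comp]
  exact hj.comp hn_inj

namespace SemidirectProduct

theorem inl_left_of_right_eq_one {N G : Type*} [Group N] [Group G] {φ : G →* MulAut N}
    {a : N ⋊[φ] G} (h : a.right = 1) : inl a.left = a := by
  ext <;> simp [h]

theorem right_pow {N G : Type*} [Group N] [Group G] {φ : G →* MulAut N} (a : N ⋊[φ] G) (n : ℕ) :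
    (a ^ n).right = a.right ^ n :=
  map_pow rightHom a n

variable {G A M : Type*} [Group G] [MulAction G A] [Group M]

theorem left_mul_apply (a b : (A → M) ⋊[mulAutArrow] G) (p : A) :
    (a * b).left p = a.left p * b.left (a.right⁻¹ • p) :=
  rfl

theorem left_inv_apply (a : (A → M) ⋊[mulAutArrow] G) (p : A) :
    a⁻¹.left p = (a.left (a.right • p))⁻¹ := by
  change (a.left (a.right⁻¹⁻¹ • p))⁻¹ = _
  rw [inv_inv]

theorem left_inl_mul_inr_pow_apply_eq_one {F : A → M} {g : G} {S : Set A}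
    (hS : ∀ p ∈ S, g⁻¹ • p ∈ S) (hF : ∀ p ∈ S, F p = 1) (n : ℕ) :
    ∀ p ∈ S, ((inl F * inr g : (A → M) ⋊[mulAutArrow] G) ^ n).left p = 1 := by
  induction n with
  | zero => exact fun _ _ => rfl
  | succ n ih =>
    intro p hp
    rw [pow_succ', left_mul_apply]
    simp [hF p hp, ih _ (hS p hp)]

end SemidirectProduct

lemma map_aa_eq_one {G : Type*} [CommGroup G] (f : F2 →* G) (i : ℕ) : f (aa i) = 1 := by
  have key (C Y X : G) : C⁻¹ * Y * C * (X⁻¹ * Y⁻¹ * X) = 1 := by simp [mul_comm]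
  simpa only [aa, map_mul, map_inv] using key (f (cc i)) (f yy) (f xx)

namespace UniversalWords

open SemidirectProduct Multiplicative

abbrev Wreath : Type := (ℤ × ℤ → FreeGroup ℕ) ⋊[mulAutArrow] Multiplicative (ℤ × ℤ)

def label (p : ℤ × ℤ) : FreeGroup ℕ :=
  if p.1 = 1 ∧ 0 < p.2 then FreeGroup.of (p.2.toNat / 2 - 1) else 1

def toWreath : F2 →* Wreath :=
  FreeGroup.lift ![inr (ofAdd (1, 0)), inl label * inr (ofAdd (0, 1))]

lemma toWreath_xx : toWreath xx = inr (ofAdd (1, 0)) := by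
  simp [toWreath, xx]

lemma toWreath_yy : toWreath yy = inl label * inr (ofAdd (0, 1)) := by
  simp [toWreath, yy]

lemma toWreath_yy_pow_left (n : ℕ) (p : ℤ × ℤ) (hp : p.1 ≠ 1) : (toWreath yy ^ n).left p = 1 := by
  rw [toWreath_yy]
  refine left_inl_mul_inr_pow_apply_eq_one (S := {p : ℤ × ℤ | p.1 ≠ 1}) (fun p hp => ?_)
    (fun p hp => if_neg fun h => hp h.1) n p hp
  simpa [← ofAdd_neg] using hp

lemma toWreath_yy_pow_right (n : ℕ) : (toWreath yy ^ n).right = ofAdd ((0 : ℤ), (n : ℤ)) := by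
  simp [toWreath_yy, right_pow, ← ofAdd_nsmul]

lemma toWreath_cc_right (i : ℕ) : (toWreath (cc i)).right = ofAdd ((1 : ℤ), 2 * (i : ℤ)) := by
  simp [cc, toWreath_xx, toWreath_yy_pow_right, sq, ← ofAdd_add, ← ofAdd_neg, two_mul]

lemma toWreath_cc_left (i : ℕ) (p : ℤ × ℤ) (hp : p.1 = 1) : (toWreath (cc i)).left p = 1 := by
  simp [cc, sq, left_mul_apply, left_inv_apply, toWreath_xx, toWreath_yy_pow_right,
    toWreath_yy_pow_left, hp, ← ofAdd_neg, ← ofAdd_add]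

lemma toWreath_aa_right (i : ℕ) : (toWreath (aa i)).right = 1 :=
  map_aa_eq_one (rightHom.comp toWreath) i

lemma toWreath_aa_left (n : ℕ) : (toWreath (aa (n + 1))).left 0 = FreeGroup.of n := by
  have hn : (2 * ((n : ℤ) + 1)).toNat / 2 - 1 = n := by omega
  simp [aa, left_mul_apply, left_inv_apply, toWreath_cc_right, toWreath_cc_left, toWreath_xx,
    toWreath_yy, label, hn, ← ofAdd_neg, ← ofAdd_add]

end UniversalWords

/-- The universal words `a_1(x,y), a_2(x,y), …` freely generate a free subgroup of countably
infinite rank in `F₂`: the homomorphism from the free group on the countably infinite alphabet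
`{b_1, b_2, …}` (indexed by `ℕ`, index `i` corresponding to `b_{i+1}`) to `F₂` sending
`b_i ↦ a_i(x,y)` is injective. -/
theorem universal_words_free :
    Function.Injective ⇑(FreeGroup.lift fun i : ℕ => aa (i + 1)) :=
  FreeGroup.injective_lift_of_retraction UniversalWords.toWreath
    SemidirectProduct.inl_injective (Pi.evalMonoidHom _ 0)
    (fun i => (UniversalWords.toWreath (aa (i + 1))).left)
    (fun _ => (SemidirectProduct.inl_left_of_right_eq_one (UniversalWords.toWreath_aa_right _)).symm)
    UniversalWords.toWreath_aa_left
end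

section
/- In the free group F₂ on x and y, the shorter universal words ā_1(x,y), ā_2(x,y), … freely generate a free subgroup of countably infinite rank; equivalently, the group homomorphism from the free group on a countably infinite alphabet {b_1, b_2, …} to F₂ sending b_i ↦ ā_i(x,y) for every i ≥ 1 is injective. -/
/-- The shorter universal word `ā_i(x,y) = y^{c_i} = c_i⁻¹ y c_i`. -/
def aabar (i : ℕ) : F2 := (cc i)⁻¹ * yy * cc i

/-!
Ping-pong. For `k ≥ 1` the reduced word of `c_k⁻¹` is `x y^{-k} x⁻¹ y^{-k} x⁻¹`; let `X_k^±` be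
the set of elements whose reduced word begins with `c_k⁻¹ y^{±1}`. These sets are pairwise
disjoint, because the length of the first run of `y⁻¹` recovers `k`. If `g ∉ X_k^∓`, then the
reduced word of `c_k g` cannot begin with `y^{∓1}`: otherwise, as `c_k⁻¹` ends in `x⁻¹`, the word
of `g = c_k⁻¹ (c_k g)` would be `c_k⁻¹ y^{∓1} …`. Hence `c_k⁻¹ y^{±1} (c_k g)` is reduced as
written, i.e. `ā_k^{±1} g ∈ X_k^±`.
-/

namespace ShorterUniversalWords

open FreeGroup List

section Words

variable {α : Type*}

theorem isReduced_append {L₁ L₂ : List (α × Bool)} (h₁ : IsReduced L₁) (h₂ : IsReduced L₂)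
    (h : ∀ p ∈ L₁.getLast?, ∀ q ∈ L₂.head?, p.1 ≠ q.1) : IsReduced (L₁ ++ L₂) :=
  IsChain.append h₁ h₂ fun p hp q hq hpq => absurd hpq (h p hp q hq)

theorem conj_letter_inv (c : FreeGroup α) (a : α) (b : Bool) :
    (c⁻¹ * mk [(a, b)] * c)⁻¹ = c⁻¹ * mk [(a, !b)] * c := by
  simp [mul_assoc, inv_mk, invRev]

variable [DecidableEq α]

theorem toWord_mul_of_isReduced {g h : FreeGroup α} (hgh : IsReduced (g.toWord ++ h.toWord)) :
    (g * h).toWord = g.toWord ++ h.toWord := by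
  rw [toWord_mul, hgh.reduce_eq]

def cylinder (w : List (α × Bool)) : Set (FreeGroup α) := {g | w <+: g.toWord}

theorem disjoint_cylinder {u v : List (α × Bool)} (huv : ¬u <+: v) (hvu : ¬v <+: u) :
    Disjoint (cylinder u) (cylinder v) :=
  Set.disjoint_left.2 fun _ hu hv => (prefix_or_prefix_of_prefix hu hv).elim huv hvu

theorem conj_mul_mem_cylinder {c g : FreeGroup α} {a : α} {b : Bool}
    (hc : ∀ p ∈ c⁻¹.toWord.getLast?, p.1 ≠ a) (hg : g ∉ cylinder (c⁻¹.toWord ++ [(a, !b)])) :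
    c⁻¹ * mk [(a, b)] * c * g ∈ cylinder (c⁻¹.toWord ++ [(a, b)]) := by
  set h := c * g
  have hh : ∀ q ∈ h.toWord.head?, q ≠ (a, !b) := by
    rintro q hq rfl
    obtain ⟨r, hr⟩ := head?_eq_some_iff.1 hq
    have hg' : g = c⁻¹ * h := by simp [h]
    apply hg
    show _ <+: _
    rw [hg', toWord_mul_of_isReduced, hr]
    · exact ⟨r, by simp⟩
    · refine isReduced_append isReduced_toWord isReduced_toWord ?_
      simpa [hr] using hc
  have hred : IsReduced ((a, b) :: h.toWord) := by
    refine isChain_cons.2 ⟨fun q hq hq₁ => ?_, isReduced_toWord⟩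
    by_contra hne
    exact hh q hq (Prod.ext hq₁.symm (Bool.eq_not.2 (Ne.symm hne)))
  have hyh : (mk [(a, b)] * h).toWord = (a, b) :: h.toWord := by
    rw [toWord_mul_of_isReduced] <;> rw [toWord_mk, IsReduced.singleton.reduce_eq]
    exacts [rfl, hred]
  show _ <+: _
  rw [mul_assoc, mul_assoc, toWord_mul_of_isReduced, hyh]
  · exact ⟨h.toWord, by simp⟩
  · rw [hyh]
    exact isReduced_append isReduced_toWord hred (by simpa using hc)

end Words

theorem eq_of_replicate_append_prefix {A : Type*} {a b c : A} (hb : b ≠ a) (hc : c ≠ a)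
    {i j : ℕ} {r s : List A} (h : replicate i a ++ b :: r <+: replicate j a ++ c :: s) :
    i = j := by
  induction i generalizing j with
  | zero => cases j <;> simp_all [replicate_succ]
  | succ i ih =>
    cases j with
    | zero => simp_all [replicate_succ, eq_comm]
    | succ j => exact congrArg _ (ih (by simpa [replicate_succ] using h))

theorem toWord_inv_cc {k : ℕ} (hk : k ≠ 0) :
    (cc k)⁻¹.toWord =
      (0, true) :: replicate k (1, false) ++ (0, false) :: replicate k (1, false) ++ [(0, false)] := by
  have hcc : (cc k)⁻¹ = xx * (yy⁻¹) ^ k * xx⁻¹ * (yy⁻¹) ^ k * xx⁻¹ := by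
    simp [cc, sq, mul_assoc]
  have hx : xx = mk [(0, true)] := rfl
  have hy : yy⁻¹ = mk [(1, false)] := inv_mk
  rw [hcc, hx, hy, inv_mk, pow_mk, flatten_replicate_singleton]
  simp only [mul_mk, toWord_mk, invRev, map_singleton, reverse_singleton, Bool.not_true,
    append_assoc, cons_append]
  apply IsReduced.reduce_eq
  simp [FreeGroup.IsReduced, isChain_append, isChain_cons, isChain_replicate_of_rel,
    getLast?_replicate, head?_replicate, hk]

theorem eq_of_toWord_inv_cc_append_prefix {i j : ℕ} {b b' : Bool} (hi : i ≠ 0) (hj : j ≠ 0)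
    (h : (cc i)⁻¹.toWord ++ [(1, b)] <+: (cc j)⁻¹.toWord ++ [(1, b')]) : i = j ∧ b = b' := by
  rw [toWord_inv_cc hi, toWord_inv_cc hj] at h
  simp only [cons_append, append_assoc, cons_prefix_cons, true_and] at h
  obtain rfl := eq_of_replicate_append_prefix (by decide) (by decide) h
  simpa using h

def pingPongSet (k : ℕ) (b : Bool) : Set F2 := cylinder ((cc k)⁻¹.toWord ++ [(1, b)])

theorem disjoint_pingPongSet {i j : ℕ} {b b' : Bool} (hi : i ≠ 0) (hj : j ≠ 0)
    (h : (i, b) ≠ (j, b')) : Disjoint (pingPongSet i b) (pingPongSet j b') := by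
  refine disjoint_cylinder (fun hij => h ?_) (fun hji => h ?_)
  · obtain ⟨rfl, rfl⟩ := eq_of_toWord_inv_cc_append_prefix hi hj hij
    rfl
  · obtain ⟨rfl, rfl⟩ := eq_of_toWord_inv_cc_append_prefix hj hi hji
    rfl

theorem conj_mul_mem_pingPongSet {k : ℕ} (hk : k ≠ 0) {b : Bool} {g : F2}
    (hg : g ∉ pingPongSet k (!b)) : (cc k)⁻¹ * mk [(1, b)] * cc k * g ∈ pingPongSet k b :=
  conj_mul_mem_cylinder (by simp [toWord_inv_cc hk, getLast?_cons, getLast?_append]) hg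

end ShorterUniversalWords

open ShorterUniversalWords FreeGroup in
/-- The shorter universal words `ā_1(x,y), ā_2(x,y), …` freely generate a free subgroup of
countably infinite rank in `F₂`: the homomorphism from the free group on the countably infinite
alphabet `{b_1, b_2, …}` (indexed by `ℕ`, index `i` corresponding to `b_{i+1}`) to `F₂` sending
`b_i ↦ ā_i(x,y)` is injective. -/
theorem shorter_universal_words_free :
    Function.Injective ⇑(FreeGroup.lift fun i : ℕ => aabar (i + 1)) := by
  have haabar (k : ℕ) : aabar k = (cc k)⁻¹ * mk [(1, true)] * cc k := rfl
  have haabar_inv (k : ℕ) : (aabar k)⁻¹ = (cc k)⁻¹ * mk [(1, false)] * cc k :=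
    conj_letter_inv (cc k) 1 true
  refine injective_lift_of_ping_pong _ (fun i => pingPongSet (i + 1) true)
    (fun i => pingPongSet (i + 1) false) (fun i => ⟨aabar (i + 1), ?_⟩)
    (fun i j hij => disjoint_pingPongSet i.succ_ne_zero j.succ_ne_zero (by simpa using hij))
    (fun i j hij => disjoint_pingPongSet i.succ_ne_zero j.succ_ne_zero (by simpa using hij))
    (fun i j => disjoint_pingPongSet i.succ_ne_zero j.succ_ne_zero (by simp))
    (fun i => Set.smul_set_subset_iff.2 fun g hg => ?_)
    (fun i => Set.smul_set_subset_iff.2 fun g hg => ?_)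
  · rw [haabar, ← mul_one (_ * cc _)]
    exact conj_mul_mem_pingPongSet i.succ_ne_zero (by simp [pingPongSet, cylinder])
  · rw [smul_eq_mul, haabar]
    exact conj_mul_mem_pingPongSet i.succ_ne_zero hg
  · rw [smul_eq_mul, Pi.inv_apply, haabar_inv]
    exact conj_mul_mem_pingPongSet i.succ_ne_zero hg
end

section
/- Let Γ = G *_φ H be the free product of groups G and H with amalgamated subgroups A ≤ G and B ≤ H with respect to an isomorphism φ : A → B (so Γ is the pushout of the inclusions of a group isomorphic to A into G and into H, and G and H embed canonically into Γ). Let G′ ≤ G and H′ ≤ H be subgroups such that, setting A′ = G′ ∩ A and B′ = H′ ∩ B, one has φ(A′) = B′. Let φ′ : A′ → B′ be the restriction of φ, and let Γ′ = ⟨G′, H′⟩ be the subgroup of Γ generated by the images of G′ and H′. Then Γ′ is naturally isomorphic to the free product G′ *_{φ′} H′ of G′ and H′ with amalgamated subgroups A′ and B′; that is, the canonical homomorphism from the amalgamated free product G′ *_{φ′} H′ to Γ is injective with image Γ′. -/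
open Monoid

/-- The relator set `{a · φ(a)⁻¹ : a ∈ A}` identifying `A ≤ G` with `B ≤ H` inside the free
product `G ∗ H`. -/
def amalgRels {G H : Type} [Group G] [Group H] (A : Subgroup G) (B : Subgroup H)
    (φ : A ≃* B) : Set (Coprod G H) :=
  {w | ∃ a : A, w = Coprod.inl (a : G) * (Coprod.inr ((φ a : H)))⁻¹}

/-- The free product `G ∗_φ H` of `G` and `H` with the subgroups `A ≤ G` and `B ≤ H` amalgamated
along the isomorphism `φ : A → B`, i.e. `⟨G, H | a = φ(a) for all a ∈ A⟩`. -/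
abbrev Amalg {G H : Type} [Group G] [Group H] (A : Subgroup G) (B : Subgroup H)
    (φ : A ≃* B) : Type :=
  Coprod G H ⧸ Subgroup.normalClosure (amalgRels A B φ)

/-- The canonical homomorphism `G →* G ∗_φ H`. -/
def Amalg.inlHom {G H : Type} [Group G] [Group H] (A : Subgroup G) (B : Subgroup H)
    (φ : A ≃* B) : G →* Amalg A B φ :=
  (QuotientGroup.mk' _).comp Coprod.inl

/-- The canonical homomorphism `H →* G ∗_φ H`. -/
def Amalg.inrHom {G H : Type} [Group G] [Group H] (A : Subgroup G) (B : Subgroup H)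
    (φ : A ≃* B) : H →* Amalg A B φ :=
  (QuotientGroup.mk' _).comp Coprod.inr
/-!
Both amalgamated products are pushouts `Monoid.PushoutI` of `Bool`-indexed diagrams, which have
a normal form theory. Every element of `G′ ∗_{φ′} H′` is `a · w` with `a ∈ A′` and `w` a reduced
word, i.e. one with no letter in `A′` or `B′`. Because `G′ ∩ A = A′` and `H′ ∩ B = B′`, the letters
of `w` stay outside `A` and `B` in `G ∗_φ H`, so the image of `w` is still reduced; a nonempty
reduced word never lies in the amalgamated subgroup, hence `a · w` maps to `1` only if `w` is
empty and `a = 1`. The range is `⟨G′, H′⟩` because `G′` and `H′` generate `G′ ∗_{φ′} H′`.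
-/

open Function

namespace Monoid.CoprodI.Word

variable {ι : Type*} {M N : ι → Type*} [∀ i, Monoid (M i)] [∀ i, Monoid (N i)]

def map (f : ∀ i, M i →* N i) (hf : ∀ i, Injective (f i)) (w : Word M) : Word N where
  toList := w.toList.map fun l => ⟨l.1, f l.1 l.2⟩
  ne_one := by
    simp only [List.mem_map]
    rintro _ ⟨l, hl, rfl⟩ h
    exact w.ne_one l hl (hf l.1 (h.trans (map_one _).symm))
  chain_ne := List.isChain_map _ |>.mpr w.chain_ne

theorem prod_map (f : ∀ i, M i →* N i) (hf : ∀ i, Injective (f i)) (w : Word M) :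
    (w.map f hf).prod = CoprodI.lift (fun i => of.comp (f i)) w.prod := by
  simp [map, prod, map_list_prod, List.map_map, Function.comp_def]

end Monoid.CoprodI.Word

namespace Monoid.PushoutI

open CoprodI

variable {ι : Type*} {G : ι → Type*} {H : Type*} [∀ i, Group (G i)] [Group H]
  {φ : ∀ i, H →* G i}

theorem NormalWord.reduced {d : NormalWord.Transversal φ} (w : NormalWord d) :
    Reduced φ w.toWord := by
  rintro ⟨i, g⟩ hg hgφ
  have hcompl := d.compl i
  exact w.ne_one _ hg <| congrArg Subtype.val <|
    (hcompl.equiv_fst_eq_self_of_mem_of_one_mem (d.one_mem i) hgφ).symm.trans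
      (hcompl.equiv_fst_eq_one_of_mem_of_one_mem (one_mem _) (w.normalized i _ hg))

theorem exists_eq_base_mul_reduced (hφ : ∀ i, Injective (φ i)) (x : PushoutI φ) :
    ∃ h w, Reduced φ w ∧ x = base φ h * ofCoprodI w.prod := by
  classical
  obtain ⟨d⟩ := NormalWord.transversal_nonempty φ hφ
  set w := NormalWord.equiv (d := d) x
  exact ⟨w.head, w.toWord, w.reduced, (NormalWord.equiv.symm_apply_apply x).symm⟩

variable {G' : ι → Type*} {H' : Type*} [∀ i, Group (G' i)] [Group H'] {φ' : ∀ i, H' →* G' i}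
  {e : ∀ i, G' i →* G i}

theorem Reduced.map (he : ∀ i, Injective (e i))
    (hrange : ∀ i, (φ i).range.comap (e i) ≤ (φ' i).range) {w : Word G'} (hw : Reduced φ' w) :
    Reduced φ (w.map e he) := by
  intro _ hg
  obtain ⟨⟨i, g⟩, hg', rfl⟩ := List.mem_map.1 hg
  exact fun hmem => hw _ hg' (hrange i hmem)

theorem injective_of_comap_range_le (hφ : ∀ i, Injective (φ i))
    (hφ' : ∀ i, Injective (φ' i)) (he : ∀ i, Injective (e i))
    {eH : H' →* H} (heH : Injective eH) (hrange : ∀ i, (φ i).range.comap (e i) ≤ (φ' i).range)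
    {Ψ : PushoutI φ' →* PushoutI φ} (hΨof : ∀ i g, Ψ (of i g) = of i (e i g))
    (hΨbase : ∀ h, Ψ (base φ' h) = base φ (eH h)) : Injective Ψ := by
  rw [injective_iff_map_eq_one]
  intro x hx
  obtain ⟨h, w, hw, rfl⟩ := exists_eq_base_mul_reduced hφ' x
  have hΨw : Ψ (ofCoprodI w.prod) = ofCoprodI (w.map e he).prod := by
    rw [Word.prod_map, ← MonoidHom.comp_apply, ← MonoidHom.comp_apply]
    congr 1
    refine CoprodI.ext_hom _ _ fun i => ?_
    ext g
    simp [hΨof, ofCoprodI_of]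
  rw [map_mul, hΨbase, hΨw] at hx
  have hempty : w.map e he = .empty := (hw.map he hrange).eq_empty_of_mem_range hφ
    ⟨(eH h)⁻¹, (eq_inv_of_mul_eq_one_right hx).symm⟩
  have hw1 : w = .empty := by
    ext1
    simpa [Word.map, Word.empty] using congrArg Word.toList hempty
  rw [hempty, Word.prod_empty, map_one, mul_one] at hx
  have h1 : h = 1 := (base_injective hφ).comp heH (by simpa using hx)
  simp [h1, hw1]

end Monoid.PushoutI

namespace Amalg

open Monoid.PushoutI

section UniversalProperty

variable {G H : Type} [Group G] [Group H] (A : Subgroup G) (B : Subgroup H) (φ : A ≃* B)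

theorem inrHom_apply_eq_inlHom (a : A) : inrHom A B φ (φ a) = inlHom A B φ a := by
  refine (QuotientGroup.eq_iff_div_mem.2 ?_).symm
  rw [div_eq_mul_inv]
  exact Subgroup.subset_normalClosure ⟨a, rfl⟩

theorem hom_ext {K : Type} [Group K] {f g : Amalg A B φ →* K}
    (hl : f.comp (inlHom A B φ) = g.comp (inlHom A B φ))
    (hr : f.comp (inrHom A B φ) = g.comp (inrHom A B φ)) : f = g :=
  QuotientGroup.monoidHom_ext _ (Coprod.hom_ext hl hr)

variable {A B φ} in
def lift {K : Type} [Group K] (f : G →* K) (g : H →* K) (hfg : ∀ a : A, f a = g (φ a)) :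
    Amalg A B φ →* K :=
  QuotientGroup.lift _ (Coprod.lift f g) <| Subgroup.normalClosure_le_normal <| by
    rintro _ ⟨a, rfl⟩
    simp [hfg]

theorem range_inlHom_sup_range_inrHom : (inlHom A B φ).range ⊔ (inrHom A B φ).range = ⊤ := by
  rw [inlHom, inrHom, MonoidHom.range_comp, MonoidHom.range_comp, ← Subgroup.map_sup,
    Coprod.range_inl_sup_range_inr, ← MonoidHom.range_eq_map, MonoidHom.range_eq_top]
  exact QuotientGroup.mk'_surjective _

variable {A B φ} in
theorem range_eq_sup {K : Type} [Group K] (F : Amalg A B φ →* K) :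
    F.range = (F.comp (inlHom A B φ)).range ⊔ (F.comp (inrHom A B φ)).range := by
  rw [MonoidHom.range_comp, MonoidHom.range_comp, ← Subgroup.map_sup,
    range_inlHom_sup_range_inrHom, MonoidHom.range_eq_map]

end UniversalProperty

section PushoutI

/-- `Factor G H true = G` and `Factor G H false = H`. -/
abbrev Factor (G H : Type) : Bool → Type := fun b => Bool.rec H G b

instance {G H : Type} [Group G] [Group H] (b : Bool) : Group (Factor G H b) :=
  Bool.rec (motive := fun b => Group (Factor G H b)) ‹Group H› ‹Group G› b

def factorMap {G H G' H' : Type} [Group G] [Group H] [Group G'] [Group H']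
    (f : G' →* G) (g : H' →* H) (b : Bool) : Factor G' H' b →* Factor G H b :=
  Bool.rec (motive := fun b => Factor G' H' b →* Factor G H b) g f b

theorem factorMap_injective {G H G' H' : Type} [Group G] [Group H] [Group G'] [Group H']
    {f : G' →* G} {g : H' →* H} (hf : Injective f) (hg : Injective g) (b : Bool) :
    Injective (factorMap f g b) := by
  cases b
  exacts [hg, hf]

variable {G H : Type} [Group G] [Group H] (A : Subgroup G) (B : Subgroup H) (φ : A ≃* B)

def leg (b : Bool) : A →* Factor G H b :=
  Bool.rec (motive := fun b => A →* Factor G H b) (B.subtype.comp φ.toMonoidHom) A.subtype b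

theorem leg_injective (b : Bool) : Injective (leg A B φ b) := by
  cases b
  · exact B.subtype_injective.comp φ.injective
  · exact A.subtype_injective

def toPushoutI : Amalg A B φ →* PushoutI (leg A B φ) :=
  lift (of (φ := leg A B φ) true) (of (φ := leg A B φ) false) fun a =>
    (of_apply_eq_base (leg A B φ) true a).trans (of_apply_eq_base (leg A B φ) false a).symm

def ofPushoutI : PushoutI (leg A B φ) →* Amalg A B φ :=
  PushoutI.lift (fun b => Bool.rec (inrHom A B φ) (inlHom A B φ) b)
    ((inlHom A B φ).comp A.subtype) fun b => by
      cases b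
      · ext a
        exact inrHom_apply_eq_inlHom A B φ a
      · rfl

theorem ofPushoutI_of_true (x : G) :
    ofPushoutI A B φ (of (φ := leg A B φ) true x) = inlHom A B φ x :=
  PushoutI.lift_of ..

theorem ofPushoutI_of_false (y : H) :
    ofPushoutI A B φ (of (φ := leg A B φ) false y) = inrHom A B φ y :=
  PushoutI.lift_of ..

def mulEquivPushoutI : Amalg A B φ ≃* PushoutI (leg A B φ) :=
  MonoidHom.toMulEquiv (toPushoutI A B φ) (ofPushoutI A B φ)
    (hom_ext A B φ (MonoidHom.ext <| ofPushoutI_of_true A B φ)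
      (MonoidHom.ext <| ofPushoutI_of_false A B φ))
    (PushoutI.hom_ext_nonempty fun b => by
      cases b
      · exact MonoidHom.ext fun y => congrArg (toPushoutI A B φ) (ofPushoutI_of_false A B φ y)
      · exact MonoidHom.ext fun x => congrArg (toPushoutI A B φ) (ofPushoutI_of_true A B φ x))

end PushoutI

section Subgroups

variable {G H : Type} [Group G] [Group H] (A : Subgroup G) (B : Subgroup H) (φ : A ≃* B)
  (G' : Subgroup G) (H' : Subgroup H) (φ' : A.comap G'.subtype ≃* B.comap H'.subtype)

theorem comap_range_leg_le (b : Bool) :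
    (leg A B φ b).range.comap (factorMap G'.subtype H'.subtype b) ≤
      (leg (A.comap G'.subtype) (B.comap H'.subtype) φ' b).range := by
  cases b
  · rintro y ⟨a, ha : ((φ a : B) : H) = y⟩
    have hy : y ∈ B.comap H'.subtype := show (y : H) ∈ B from ha ▸ (φ a).2
    obtain ⟨a', ha'⟩ := φ'.surjective ⟨y, hy⟩
    exact ⟨a', congrArg Subtype.val ha'⟩
  · rintro x ⟨a, ha : (a : G) = x⟩
    exact ⟨⟨x, show (x : G) ∈ A from ha ▸ a.2⟩, rfl⟩

variable (hφ' : ∀ a : A.comap G'.subtype,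
      ((φ' a : H') : H) = ((φ ⟨((a : G') : G), a.2⟩ : B) : H))

def ofSubgroups : Amalg (A.comap G'.subtype) (B.comap H'.subtype) φ' →* Amalg A B φ :=
  lift ((inlHom A B φ).comp G'.subtype) ((inrHom A B φ).comp H'.subtype) fun a =>
    ((congrArg (inrHom A B φ) (hφ' a)).trans (inrHom_apply_eq_inlHom A B φ _)).symm

theorem ofSubgroups_inlHom (x : G') :
    ofSubgroups A B φ G' H' φ' hφ' (inlHom _ _ φ' x) = inlHom A B φ x := rfl

theorem ofSubgroups_inrHom (y : H') :
    ofSubgroups A B φ G' H' φ' hφ' (inrHom _ _ φ' y) = inrHom A B φ y := rfl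

theorem range_ofSubgroups :
    (ofSubgroups A B φ G' H' φ' hφ').range = G'.map (inlHom A B φ) ⊔ H'.map (inrHom A B φ) := by
  rw [range_eq_sup]
  change ((inlHom A B φ).comp G'.subtype).range ⊔ ((inrHom A B φ).comp H'.subtype).range = _
  rw [MonoidHom.range_comp, MonoidHom.range_comp, Subgroup.range_subtype, Subgroup.range_subtype]

theorem ofSubgroups_injective : Injective (ofSubgroups A B φ G' H' φ' hφ') := by
  set e := mulEquivPushoutI A B φ
  set e' := mulEquivPushoutI _ _ φ'
  set Ψ := e.toMonoidHom.comp ((ofSubgroups A B φ G' H' φ' hφ').comp e'.symm.toMonoidHom)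
  have hΨof : ∀ b x, Ψ (of b x) = of b (factorMap G'.subtype H'.subtype b x) := by
    rintro (_ | _) x
    · exact congrArg (fun z => e (ofSubgroups A B φ G' H' φ' hφ' z)) (ofPushoutI_of_false _ _ φ' x)
    · exact congrArg (fun z => e (ofSubgroups A B φ G' H' φ' hφ' z)) (ofPushoutI_of_true _ _ φ' x)
  let eBase : A.comap G'.subtype →* A :=
    (G'.subtype.comp (A.comap G'.subtype).subtype).codRestrict A fun a => a.2
  have heBase : Injective eBase := fun a b h =>
    Subtype.ext <| Subtype.ext <| congrArg (fun c : A => (c : G)) h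
  have hΨbase : ∀ a, Ψ (base _ a) = base _ (eBase a) := fun a => by
    rw [← of_apply_eq_base _ true, hΨof, ← of_apply_eq_base _ true]
    rfl
  have hΨ : Injective Ψ :=
    injective_of_comap_range_le (leg_injective A B φ) (leg_injective _ _ φ')
      (factorMap_injective G'.subtype_injective H'.subtype_injective) heBase
      (comap_range_leg_le A B φ G' H' φ') hΨof hΨbase
  have hΦ : ⇑(ofSubgroups A B φ G' H' φ' hφ') = e.symm ∘ Ψ ∘ e' := by
    funext z
    simp only [Ψ, comp_apply, MonoidHom.coe_comp, MulEquiv.coe_toMonoidHom,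
      MulEquiv.symm_apply_apply]
  rw [hΦ]
  exact e.symm.injective.comp (hΨ.comp e'.injective)

end Subgroups

end Amalg

/-- **Lemma (subgroups of amalgamated products), part (1).**  Let `Γ = G ∗_φ H` with amalgamated
subgroups `A ≤ G`, `B ≤ H` along `φ : A ≃ B`.  Let `G′ ≤ G` and `H′ ≤ H` be subgroups such that
`φ` restricts to an isomorphism `φ′` of `A′ = G′ ∩ A` onto `B′ = H′ ∩ B` (the restriction being
encoded by the compatibility hypothesis `hφ'`).  Then the subgroup `Γ′ = ⟨G′, H′⟩` of `Γ` is
naturally isomorphic to `G′ ∗_{φ′} H′`: the canonical homomorphism `G′ ∗_{φ′} H′ → Γ` (which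
exists and is unique, sending `G′` and `H′` identically onto their images) is injective and its
range is `Γ′`. -/
theorem amalg_subgroup_structure {G H : Type} [Group G] [Group H]
    (A : Subgroup G) (B : Subgroup H) (φ : A ≃* B)
    (G' : Subgroup G) (H' : Subgroup H)
    (φ' : (A.comap G'.subtype) ≃* (B.comap H'.subtype))
    (hφ' : ∀ a : A.comap G'.subtype,
      ((φ' a : H') : H) = ((φ ⟨((a : G') : G), a.2⟩ : B) : H)) :
    ∃ Φ : Amalg (A.comap G'.subtype) (B.comap H'.subtype) φ' →* Amalg A B φ,
      (∀ g : G', Φ (Amalg.inlHom (A.comap G'.subtype) (B.comap H'.subtype) φ' g)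
          = Amalg.inlHom A B φ (g : G)) ∧
      (∀ h : H', Φ (Amalg.inrHom (A.comap G'.subtype) (B.comap H'.subtype) φ' h)
          = Amalg.inrHom A B φ (h : H)) ∧
      Function.Injective Φ ∧
      Φ.range = G'.map (Amalg.inlHom A B φ) ⊔ H'.map (Amalg.inrHom A B φ) :=
  ⟨Amalg.ofSubgroups A B φ G' H' φ' hφ', Amalg.ofSubgroups_inlHom A B φ G' H' φ' hφ',
    Amalg.ofSubgroups_inrHom A B φ G' H' φ' hφ', Amalg.ofSubgroups_injective A B φ G' H' φ' hφ',
    Amalg.range_ofSubgroups A B φ G' H' φ' hφ'⟩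
end

section
/- Let T = ⟨x, y | [ā_k(x,y), ā_l(x,y)], k, l = 1, 2, …⟩ be the quotient of the free group F₂ on x and y by the normal closure of all commutators [c_k⁻¹ y c_k, c_l⁻¹ y c_l] for k, l ≥ 1, where c_i = (x y^i)² x⁻¹. Then there is an injective homomorphism from the free abelian group of countably infinite rank (the group of finitely supported functions ℕ → ℤ under addition) into the 2-generator group T which sends the i-th basis element to the image in T of the word ā_i(x,y) = c_i⁻¹ y c_i. -/
/-- The relators `[ā_k(x,y), ā_l(x,y)] = ā_k⁻¹ ā_l⁻¹ ā_k ā_l`, `k, l = 1, 2, …`, of the group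
`T_{ℤ^∞}`. -/
def Tcommrels : Set F2 :=
  {w | ∃ k l : ℕ, 1 ≤ k ∧ 1 ≤ l ∧
    w = (aabar k)⁻¹ * (aabar l)⁻¹ * aabar k * aabar l}

/-!
Map `F₂` to the iterated wreath product `W = (ℤ ≀ ℤ) ≀ ℤ`: send `x` to the generator of the top
copy of `ℤ` and `y` to the base element with coordinate `b` (the lamp at `0`) at `0` and `c` (the
generator of `ℤ ≀ ℤ`) at `1`. Writing `ā_i` as a product of conjugates of powers of `y` by `x^{±1}`,
its image is the base element with coordinate `c^{-i} b c^i` (the lamp at `i`) at `1`, coordinate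
`c` at `2`, and `1` elsewhere. These images commute, so the map factors through `T`; and they are
independent, since coordinate `1` records every exponent. In `T` itself the `ā_i` commute by the
defining relators, so `ℕ →₀ ℤ` maps to `T`, and its composite with `T → W` is injective.
-/

open SemidirectProduct Multiplicative

theorem aabar_eq_mul_conj (i : ℕ) :
    aabar i = (xx * yy ^ i * xx⁻¹)⁻¹ * (yy ^ i)⁻¹ * (xx⁻¹ * yy * xx) * yy ^ i *
      (xx * yy ^ i * xx⁻¹) := by
  simp only [aabar, cc, sq]
  group

theorem commute_mk_aabar {k l : ℕ} (hk : 1 ≤ k) (hl : 1 ≤ l) :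
    Commute (QuotientGroup.mk (aabar k) : F2 ⧸ Subgroup.normalClosure Tcommrels)
      (QuotientGroup.mk (aabar l)) := by
  have h := (QuotientGroup.eq_one_iff _).mpr
    (Subgroup.subset_normalClosure ⟨k, l, hk, hl, rfl⟩ : _ ∈ Subgroup.normalClosure Tcommrels)
  rw [← Commute.inv_inv_iff, ← commutatorElement_eq_one_iff_commute, commutatorElement_def]
  simpa using h

theorem normalClosure_Tcommrels_le_ker {G : Type*} [Group G] (ψ : F2 →* G)
    (h : ∀ k l, 1 ≤ k → 1 ≤ l → Commute (ψ (aabar k)) (ψ (aabar l))) :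
    Subgroup.normalClosure Tcommrels ≤ ψ.ker := by
  refine Subgroup.normalClosure_le_normal ?_
  rintro _ ⟨k, l, hk, hl, rfl⟩
  have := commutatorElement_eq_one_iff_commute.mpr (h k l hk hl).inv_inv
  simpa [commutatorElement_def] using this

namespace Finsupp

open scoped IsMulCommutative

variable {ι G : Type*} [Group G]

noncomputable def liftOfCommute (a : ι → G) (ha : ∀ i j, Commute (a i) (a j)) :
    Multiplicative (ι →₀ ℤ) →* G :=
  haveI : IsMulCommutative (Subgroup.closure (Set.range a)) :=
    Subgroup.isMulCommutative_closure (by rintro _ ⟨i, rfl⟩ _ ⟨j, rfl⟩; exact ha i j)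
  (Subgroup.closure (Set.range a)).subtype.comp <| AddMonoidHom.toMultiplicativeLeft <|
    liftAddHom fun i => zmultiplesHom _ (Additive.ofMul ⟨a i, Subgroup.subset_closure ⟨i, rfl⟩⟩)

@[simp]
theorem liftOfCommute_single (a : ι → G) (ha : ∀ i j, Commute (a i) (a j)) (i : ι) :
    liftOfCommute a ha (ofAdd (single i 1)) = a i := by
  simp [liftOfCommute]

end Finsupp

abbrev IntWreath (H : Type*) [Group H] := (ℤ → H) ⋊[mulAutArrow] Multiplicative ℤ

namespace IntWreath

section General

variable {H : Type*} [Group H]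

theorem inr_inv_mul_inl_mul_inr (g : Multiplicative ℤ) (F : ℤ → H) :
    (inr g)⁻¹ * inl F * inr g = (inl fun z => F (g.toAdd + z) : IntWreath H) := by
  rw [← map_inv, ← inl_aut_inv, ← map_inv]
  congr
  ext z
  change F ((g⁻¹)⁻¹ • z) = _
  rw [inv_inv]
  rfl

/-- `mulAutArrow g` translates by `g⁻¹`; with the generator `-1` the coordinates computed below
sit at positive positions. -/
def shift : Multiplicative ℤ := ofAdd (-1)

theorem inr_shift_inv_conj (F : ℤ → H) :
    (inr shift)⁻¹ * inl F * inr shift = (inl fun z => F (z - 1) : IntWreath H) := by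
  rw [inr_inv_mul_inl_mul_inr]
  simp [shift, sub_eq_neg_add]

theorem inr_shift_conj (F : ℤ → H) :
    inr shift * inl F * (inr shift)⁻¹ = (inl fun z => F (z + 1) : IntWreath H) := by
  simpa [shift, add_comm] using inr_inv_mul_inl_mul_inr shift⁻¹ F

def lift (E : ℤ → H) : F2 →* IntWreath H := FreeGroup.lift ![inr shift, inl E]

theorem lift_aabar (E : ℤ → H) (i : ℕ) :
    lift E (aabar i) =
      inl fun z => (E z ^ i * E (z + 1) ^ i)⁻¹ * E (z - 1) * (E z ^ i * E (z + 1) ^ i) := by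
  have hx : lift E xx = inr shift := by simp [lift, xx]
  have hy : lift E yy = inl E := by simp [lift, yy]
  simp only [aabar_eq_mul_conj, map_mul, map_inv, map_pow, hx, hy]
  simp only [← map_pow]
  simp only [inr_shift_conj, inr_shift_inv_conj]
  simp only [← map_inv, ← map_mul]
  congr 1
  funext z
  simp only [Pi.mul_apply, Pi.inv_apply, Pi.pow_apply]
  group

end General

def lamp : IntWreath (Multiplicative ℤ) := inl (Pi.mulSingle 0 (ofAdd 1))

def step : IntWreath (Multiplicative ℤ) := inr shift

theorem step_pow_conj_lamp (n : ℕ) :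
    (step ^ n)⁻¹ * lamp * step ^ n = inl (Pi.mulSingle (n : ℤ) (ofAdd 1)) := by
  rw [step, lamp, ← map_pow, inr_inv_mul_inl_mul_inr]
  congr 1
  funext z
  simp only [shift, ← ofAdd_nsmul, toAdd_ofAdd, Pi.mulSingle_apply, smul_neg, nsmul_eq_mul,
    mul_one]
  split_ifs <;> first | rfl | omega

noncomputable def lampConfig : Multiplicative (ℕ →₀ ℤ) →* (ℤ → Multiplicative ℤ) :=
  (MulEquiv.funMultiplicative ℤ ℤ).toMonoidHom.comp <| AddMonoidHom.toMultiplicative <|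
    Finsupp.coeFnAddHom.comp (Finsupp.mapDomain.addMonoidHom fun k : ℕ => (k : ℤ) + 1)

theorem lampConfig_injective : Function.Injective lampConfig := by
  rw [lampConfig, MonoidHom.coe_comp]
  exact (MulEquiv.injective _).comp <| DFunLike.coe_injective.comp <|
    Finsupp.mapDomain_injective fun _ _ h => by simpa using h

theorem lampConfig_single (k : ℕ) :
    lampConfig (ofAdd (Finsupp.single k 1)) = Pi.mulSingle ((k : ℤ) + 1) (ofAdd 1) := by
  funext z
  simp [lampConfig, Finsupp.single_apply, Pi.mulSingle_apply, eq_comm, apply_ite ofAdd]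

def yConfig : ℤ → IntWreath (Multiplicative ℤ) := fun z =>
  if z = 0 then lamp else if z = 1 then step else 1

noncomputable def freeAbelianEmbedding :
    Multiplicative (ℕ →₀ ℤ) →* IntWreath (IntWreath (Multiplicative ℤ)) :=
  inl.comp <| MonoidHom.pi fun z =>
    if z = 1 then inl.comp lampConfig
    else if z = 2 then (zpowersHom _ step).comp (AddMonoidHom.toMultiplicative Finsupp.degree)
    else 1

theorem freeAbelianEmbedding_injective : Function.Injective freeAbelianEmbedding := by
  intro f g h
  have h1 := congr_fun (inl_injective h) 1
  simp only [MonoidHom.pi_apply, if_pos, MonoidHom.comp_apply, inl_inj] at h1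
  exact lampConfig_injective h1

theorem lift_yConfig_aabar_succ (k : ℕ) :
    lift yConfig (aabar (k + 1)) = freeAbelianEmbedding (ofAdd (Finsupp.single k 1)) := by
  rw [lift_aabar, freeAbelianEmbedding, MonoidHom.comp_apply]
  congr 1
  funext z
  rw [MonoidHom.pi_apply]
  by_cases h1 : z = 1
  · subst h1
    simpa [yConfig, lampConfig_single] using step_pow_conj_lamp (k + 1)
  by_cases h2 : z = 2
  · subst h2
    simp [yConfig]
  have h0 : yConfig (z - 1) = 1 := by
    simp only [yConfig]
    rw [if_neg (by omega), if_neg (by omega)]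
  simp [h0, h1, h2]

theorem normalClosure_Tcommrels_le_ker_lift :
    Subgroup.normalClosure Tcommrels ≤ (lift yConfig).ker := by
  refine normalClosure_Tcommrels_le_ker _ fun k l hk hl => ?_
  obtain ⟨k, rfl⟩ := Nat.exists_eq_add_of_le' hk
  obtain ⟨l, rfl⟩ := Nat.exists_eq_add_of_le' hl
  rw [lift_yConfig_aabar_succ, lift_yConfig_aabar_succ]
  exact (Commute.all _ _).map freeAbelianEmbedding

end IntWreath

/-- **Example (embedding of ℤ^∞).**  There is an injective homomorphism of the free abelian
group of countably infinite rank (the additive group `ℕ →₀ ℤ` of finitely supported functions)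
into the 2-generator group `T = ⟨x, y | [ā_k(x,y), ā_l(x,y)], k, l = 1, 2, …⟩` which sends the
`i`-th basis element (the indicator function at `i`, corresponding to `ā_{i+1}`) to the image in
`T` of the word `ā_{i+1}(x,y)`. -/
theorem free_abelian_embed :
    ∃ φ : Multiplicative (ℕ →₀ ℤ) →* F2 ⧸ Subgroup.normalClosure Tcommrels,
      Function.Injective φ ∧
      ∀ i : ℕ,
        φ (Multiplicative.ofAdd (Finsupp.single i (1 : ℤ)))
          = QuotientGroup.mk (aabar (i + 1)) := by
  let φ := Finsupp.liftOfCommute (fun i => (aabar (i + 1) : F2 ⧸ Subgroup.normalClosure Tcommrels))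
    fun i j => commute_mk_aabar (by omega) (by omega)
  let ψ := QuotientGroup.lift _ (IntWreath.lift IntWreath.yConfig)
    IntWreath.normalClosure_Tcommrels_le_ker_lift
  have hfactor : ψ.comp φ = IntWreath.freeAbelianEmbedding :=
    Finsupp.mulHom_ext' fun i =>
      MonoidHom.ext_mint (by simp [φ, ψ, IntWreath.lift_yConfig_aabar_succ])
  refine ⟨φ, ?_, fun i => Finsupp.liftOfCommute_single _ _ i⟩
  apply Function.Injective.of_comp (f := ψ)
  rw [← MonoidHom.coe_comp, hfactor]
  exact IntWreath.freeAbelianEmbedding_injective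
end
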